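/- Witness count for a detrimental OR-insertion: Let n ≥ 1 be an integer, let S ⊆ {1, …, n} with |S| = U, let j ∈ S and k ∈ {1,…,n} \ S. Define the parent function p(x) = ⋀_{i∈S} x_i and the offspring function q(x) = (⋀_{i∈S\{j}} x_i) ∧ (x_j ∨ x_k) on inputs x : {1,…,n} → {false, true}. Then the set of witnesses W = {x : q(x) ≠ AND_n(x) and p(x) = AND_n(x)} has size exactly 2^(n−U−1), and 2·|W| ≥ |{x : p(x) ≠ AND_n(x)}| = 2^(n−U) − 1. -/
import Mathlib

open Classical in
lemma card_fix {n : ℕ} (T : Finset (Fin n)) (v : Fin n → Bool) :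
    (Finset.univ.filter (fun x : Fin n → Bool => ∀ i ∈ T, x i = v i)).card
      = 2 ^ (n - T.card) := by
  have e : {x : Fin n → Bool // ∀ i ∈ T, x i = v i} ≃ ((↥(Tᶜ : Finset (Fin n))) → Bool) :=
    { toFun := fun x i => x.1 i.1
      invFun := fun g => ⟨fun i => if h : i ∈ T then v i else g ⟨i, by simpa using h⟩,
        fun i hi => by simp [hi]⟩
      left_inv := by
        rintro ⟨x, hx⟩
        ext i
        by_cases h : i ∈ T <;> simp [h, hx i]
      right_inv := by
        intro g
        ext ⟨i, hi⟩
        have : i ∉ T := by simpa using hi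
        simp [this] }
  have h1 : (Finset.univ.filter (fun x : Fin n → Bool => ∀ i ∈ T, x i = v i)).card
      = Fintype.card {x : Fin n → Bool // ∀ i ∈ T, x i = v i} := by
    rw [Fintype.card_subtype]
  rw [h1, Fintype.card_congr e]
  simp [Finset.card_compl]

lemma aux_sub_succ (a b : ℕ) (h : a < b) : b - a - 1 + 1 = b - a := by omega

open Classical in
/-- **Witness count for a detrimental OR-insertion.**
Let `S ⊆ {1,…,n}` with `|S| = U`, let `j ∈ S` and `k ∉ S`.  The parent is
`p x = ⋀_{i∈S} x i` and the offspring is `q x = (⋀_{i∈S∖{j}} x i) ∧ (x j ∨ x k)`.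
The set `W` of witnesses (inputs where `q` is wrong on `AND_n` but `p` is correct) has
size exactly `2^(n−U−1)`, the parent is wrong on exactly `2^(n−U) − 1` inputs, and
`2·|W| ≥ 2^(n−U) − 1`. -/
theorem witness_count_or_insertion (n : ℕ) (hn : 1 ≤ n) (S : Finset (Fin n))
    (j k : Fin n) (hj : j ∈ S) (hk : k ∉ S) :
    (Finset.univ.filter
        (fun x : Fin n → Bool =>
          ((∀ i ∈ S.erase j, x i = true) ∧ (x j = true ∨ x k = true)) ≠ (∀ i, x i = true) ∧
            ((∀ i ∈ S, x i = true) = (∀ i, x i = true)))).card = 2 ^ (n - S.card - 1) ∧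
    (Finset.univ.filter
        (fun x : Fin n → Bool => (∀ i ∈ S, x i = true) ≠ (∀ i, x i = true))).card =
      2 ^ (n - S.card) - 1 ∧
    2 ^ (n - S.card) - 1 ≤
      2 * (Finset.univ.filter
        (fun x : Fin n → Bool =>
          ((∀ i ∈ S.erase j, x i = true) ∧ (x j = true ∨ x k = true)) ≠ (∀ i, x i = true) ∧
            ((∀ i ∈ S, x i = true) = (∀ i, x i = true)))).card := by
  have hjk : j ≠ k := fun h => hk (h ▸ hj)
  have hUlt : S.card < n := by
    have : S ⊂ Finset.univ := Finset.ssubset_univ_iff.mpr (fun h => hk (h ▸ Finset.mem_univ k))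
    simpa using Finset.card_lt_card this
  set v : Fin n → Bool := fun i => if i = j then false else true with hv
  -- Witness set characterization
  have hW : (Finset.univ.filter
        (fun x : Fin n → Bool =>
          ((∀ i ∈ S.erase j, x i = true) ∧ (x j = true ∨ x k = true)) ≠ (∀ i, x i = true) ∧
            ((∀ i ∈ S, x i = true) = (∀ i, x i = true))))
      = Finset.univ.filter (fun x : Fin n → Bool => ∀ i ∈ insert k S, x i = v i) := by
    apply Finset.filter_congr
    intro x _
    constructor
    · rintro ⟨hq, hp⟩
      have hall : ¬ ∀ i, x i = true := by
        intro h
        exact hq (by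
          rw [eq_iff_iff]
          exact ⟨fun _ => h, fun _ => ⟨fun i _ => h i, Or.inl (h j)⟩⟩)
      have hpS : ¬ ∀ i ∈ S, x i = true := by
        rw [hp]; exact hall
      have hqT : (∀ i ∈ S.erase j, x i = true) ∧ (x j = true ∨ x k = true) := by
        by_contra hno
        exact hq (by
          rw [eq_iff_iff]
          exact ⟨fun h => absurd h hno, fun h => absurd h hall⟩)
      have hxj : x j = false := by
        cases hb : x j with
        | true =>
          exact absurd (fun i hi =>
            if hij : i = j then hij ▸ hb
            else hqT.1 i (Finset.mem_erase.mpr ⟨hij, hi⟩)) hpS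
        | false => rfl
      have hxk : x k = true := hqT.2.resolve_left (by simp [hxj])
      intro i hi
      rcases Finset.mem_insert.mp hi with rfl | hiS
      · simpa [hv, Ne.symm hjk] using hxk
      · by_cases hij : i = j
        · subst hij; simp [hv, hxj]
        · simpa [hv, hij] using hqT.1 i (Finset.mem_erase.mpr ⟨hij, hiS⟩)
    · intro h
      have hxj : x j = false := by
        simpa [hv] using h j (Finset.mem_insert_of_mem hj)
      have hxk : x k = true := by
        simpa [hv, Ne.symm hjk] using h k (Finset.mem_insert_self k S)
      have herase : ∀ i ∈ S.erase j, x i = true := by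
        intro i hi
        obtain ⟨hij, hiS⟩ := Finset.mem_erase.mp hi
        simpa [hv, hij] using h i (Finset.mem_insert_of_mem hiS)
      have hall : ¬ ∀ i, x i = true := fun h' => by simp [h' j] at hxj
      have hpF : ¬ ∀ i ∈ S, x i = true := fun h' => by simp [h' j hj] at hxj
      refine ⟨?_, ?_⟩
      · intro heq
        rw [eq_iff_iff] at heq
        exact hall (heq.mp ⟨herase, Or.inr hxk⟩)
      · rw [eq_iff_iff]
        exact ⟨fun h' => absurd h' hpF, fun h' => absurd h' hall⟩
  have hWcard : (Finset.univ.filter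
        (fun x : Fin n → Bool =>
          ((∀ i ∈ S.erase j, x i = true) ∧ (x j = true ∨ x k = true)) ≠ (∀ i, x i = true) ∧
            ((∀ i ∈ S, x i = true) = (∀ i, x i = true)))).card = 2 ^ (n - S.card - 1) := by
    rw [hW, card_fix, Finset.card_insert_of_notMem hk]
    congr 1
  -- Parent-wrong set
  have hP : (Finset.univ.filter
        (fun x : Fin n → Bool => (∀ i ∈ S, x i = true) ≠ (∀ i, x i = true)))
      = (Finset.univ.filter (fun x : Fin n → Bool => ∀ i ∈ S, x i = true)).erase
          (fun _ => true) := by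
    ext x
    simp only [Finset.mem_erase, Finset.mem_filter, Finset.mem_univ, true_and]
    have hx : (x ≠ fun _ => true) ↔ ¬ ∀ i, x i = true :=
      ⟨fun hne hall => hne (funext fun i => hall i), fun h hc => h (fun i => congrFun hc i)⟩
    constructor
    · intro hne
      have hnall : ¬ ∀ i, x i = true := by
        intro h
        exact hne (by rw [eq_iff_iff]; exact ⟨fun _ => h, fun _ i _ => h i⟩)
      have hA : ∀ i ∈ S, x i = true := by
        by_contra hA
        exact hne (by rw [eq_iff_iff]; exact ⟨fun h => absurd h hA, fun h => absurd h hnall⟩)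
      exact ⟨hx.mpr hnall, hA⟩
    · rintro ⟨hne, hA⟩
      intro heq
      rw [eq_iff_iff] at heq
      exact (hx.mp hne) (heq.mp hA)
  have hPcard : (Finset.univ.filter
        (fun x : Fin n → Bool => (∀ i ∈ S, x i = true) ≠ (∀ i, x i = true))).card
      = 2 ^ (n - S.card) - 1 := by
    have hmem : (fun _ => true) ∈
        Finset.univ.filter (fun x : Fin n → Bool => ∀ i ∈ S, x i = true) := by simp
    rw [hP, Finset.card_erase_of_mem hmem]
    congr 1
    simpa using card_fix S (fun _ => true)
  refine ⟨hWcard, hPcard, ?_⟩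
  rw [hWcard]
  have h2 : 2 * 2 ^ (n - S.card - 1) = 2 ^ (n - S.card) := by
    have h3 : n - S.card - 1 + 1 = n - S.card := aux_sub_succ _ _ hUlt
    rw [← h3, pow_succ]
    exact Nat.mul_comm _ _
  rw [h2]
  exact Nat.sub_le _ _
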